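/- arXiv:math/0502274 — 4 statements merged into one kernel-verified Lean document; each statement's English description precedes it below -/
import Mathlib

section
/- Let (Y, μ) be a measure space, F ⊆ Y a measurable set, Q : Y → [0,∞) measurable and P : Y → ℂ measurable. Assume ∫_F Q dμ ≤ 1 and ∫_F Q|P|² dμ ≤ 1. Then ∫_F Q·|P| dμ ≤ (1/2)(∫_F Q dμ + ∫_F Q·|P|² dμ) − (1/8)(∫_F Q·||P|²−1| dμ)². -/
/-!
Put `t = ‖P‖` and integrate against `Q dμ` on `F`, with moments `A = ∫ Q`, `B = ∫ Q t`,
`C = ∫ Q t²`, `D = ∫ Q |t² - 1|`. Since `|t² - 1| = |t - 1| (t + 1)`, Cauchy–Schwarz gives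
`D² ≤ ∫ Q (t - 1)² · ∫ Q (t + 1)² = (A - 2B + C)(A + 2B + C)`.
The first factor is nonnegative, so `2B ≤ A + C ≤ 2` and the second factor is at most `4`;
hence `D² ≤ 4 (A - 2B + C)`, which is the claim.
-/

open MeasureTheory

namespace MeasureTheory

variable {α : Type*} [MeasurableSpace α] {ν : Measure α} {w f g : α → ℝ}

theorem integral_mul_add_sq (hf : Integrable (fun x => w x * f x ^ 2) ν)
    (hfg : Integrable (fun x => w x * (f x * g x)) ν)
    (hg : Integrable (fun x => w x * g x ^ 2) ν) (s : ℝ) :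
    ∫ x, w x * (s * f x + g x) ^ 2 ∂ν
      = s ^ 2 * ∫ x, w x * f x ^ 2 ∂ν + 2 * s * ∫ x, w x * (f x * g x) ∂ν
        + ∫ x, w x * g x ^ 2 ∂ν := by
  have hexpand : (fun x => w x * (s * f x + g x) ^ 2)
      = fun x => s ^ 2 * (w x * f x ^ 2) + 2 * s * (w x * (f x * g x)) + w x * g x ^ 2 := by
    funext x; ring
  rw [hexpand, integral_add ?_ hg, integral_add (hf.const_mul _) (hfg.const_mul _),
    integral_const_mul, integral_const_mul]
  exact (hf.const_mul _).add (hfg.const_mul _)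

theorem sq_integral_weighted_mul_le (hw0 : ∀ x, 0 ≤ w x)
    (hf : Integrable (fun x => w x * f x ^ 2) ν)
    (hfg : Integrable (fun x => w x * (f x * g x)) ν)
    (hg : Integrable (fun x => w x * g x ^ 2) ν) :
    (∫ x, w x * (f x * g x) ∂ν) ^ 2
      ≤ (∫ x, w x * f x ^ 2 ∂ν) * ∫ x, w x * g x ^ 2 ∂ν := by
  have hquad : ∀ s : ℝ, 0 ≤ (∫ x, w x * f x ^ 2 ∂ν) * (s * s)
      + 2 * (∫ x, w x * (f x * g x) ∂ν) * s + ∫ x, w x * g x ^ 2 ∂ν := fun s => by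
    have : 0 ≤ ∫ x, w x * (s * f x + g x) ^ 2 ∂ν :=
      integral_nonneg fun x => mul_nonneg (hw0 x) (sq_nonneg _)
    rw [integral_mul_add_sq hf hfg hg] at this
    linarith
  have := discrim_le_zero hquad
  rw [discrim] at this
  linarith

theorem integrable_mul_of_integrable_mul_sq (hw0 : ∀ x, 0 ≤ w x) (hf0 : ∀ x, 0 ≤ f x)
    (hw : Integrable w ν) (hf : Integrable (fun x => w x * f x ^ 2) ν) :
    Integrable (fun x => w x * f x) ν := by
  -- `w f = √(w · w f²)` is measurable because the two given integrands are.
  have hsqrt : (fun x => w x * f x) = fun x => √(w x * (w x * f x ^ 2)) := by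
    funext x
    rw [show w x * (w x * f x ^ 2) = (w x * f x) ^ 2 by ring,
      Real.sqrt_sq (mul_nonneg (hw0 x) (hf0 x))]
  have hmeas : AEStronglyMeasurable (fun x => w x * f x) ν := by
    rw [hsqrt]
    exact Real.continuous_sqrt.comp_aestronglyMeasurable
      (hw.aestronglyMeasurable.mul hf.aestronglyMeasurable)
  refine (hw.add hf).mono' hmeas (Filter.Eventually.of_forall fun x => ?_)
  rw [Real.norm_of_nonneg (mul_nonneg (hw0 x) (hf0 x)), Pi.add_apply]
  nlinarith [mul_nonneg (hw0 x) (sq_nonneg (f x - 1)), mul_nonneg (hw0 x) (sq_nonneg (f x))]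

theorem integrable_mul_add_const_sq (hw : Integrable w ν) (hf : Integrable (fun x => w x * f x) ν)
    (hf2 : Integrable (fun x => w x * f x ^ 2) ν) (c : ℝ) :
    Integrable (fun x => w x * (f x + c) ^ 2) ν := by
  have hexpand : (fun x => w x * (f x + c) ^ 2)
      = fun x => w x * f x ^ 2 + 2 * c * (w x * f x) + c ^ 2 * w x := by
    funext x; ring
  rw [hexpand]
  exact (hf2.add (hf.const_mul _)).add (hw.const_mul _)

theorem integral_mul_add_const_sq (hw : Integrable w ν) (hf : Integrable (fun x => w x * f x) ν)
    (hf2 : Integrable (fun x => w x * f x ^ 2) ν) (c : ℝ) :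
    ∫ x, w x * (f x + c) ^ 2 ∂ν
      = ∫ x, w x * f x ^ 2 ∂ν + 2 * c * ∫ x, w x * f x ∂ν + c ^ 2 * ∫ x, w x ∂ν := by
  have hexpand : (fun x => w x * (f x + c) ^ 2)
      = fun x => w x * f x ^ 2 + 2 * c * (w x * f x) + c ^ 2 * w x := by
    funext x; ring
  rw [hexpand, integral_add ?_ (hw.const_mul _), integral_add hf2 (hf.const_mul _),
    integral_const_mul, integral_const_mul]
  exact hf2.add (hf.const_mul _)

end MeasureTheory

theorem stmt0_general {Y : Type*} [MeasurableSpace Y] (μ : Measure Y) (F : Set Y)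
    (Q : Y → ℝ) (P : Y → ℂ)
    (hQnonneg : ∀ y, 0 ≤ Q y)
    (hQint : IntegrableOn Q F μ)
    (hQP2int : IntegrableOn (fun y => Q y * ‖P y‖ ^ 2) F μ)
    (hQ1 : ∫ y in F, Q y ∂μ ≤ 1)
    (hQP2 : ∫ y in F, Q y * ‖P y‖ ^ 2 ∂μ ≤ 1) :
    ∫ y in F, Q y * ‖P y‖ ∂μ ≤
      (1 / 2) * ((∫ y in F, Q y ∂μ) + ∫ y in F, Q y * ‖P y‖ ^ 2 ∂μ)
        - (1 / 8) * (∫ y in F, Q y * |‖P y‖ ^ 2 - 1| ∂μ) ^ 2 := by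
  have hP0 : ∀ y, 0 ≤ ‖P y‖ := fun y => norm_nonneg _
  have hQP : IntegrableOn (fun y => Q y * ‖P y‖) F μ :=
    integrable_mul_of_integrable_mul_sq hQnonneg hP0 hQint hQP2int
  set A := ∫ y in F, Q y ∂μ
  set B := ∫ y in F, Q y * ‖P y‖ ∂μ
  set C := ∫ y in F, Q y * ‖P y‖ ^ 2 ∂μ
  set D := ∫ y in F, Q y * |‖P y‖ ^ 2 - 1| ∂μ
  have hfactor : ∀ y, |‖P y‖ ^ 2 - 1| = |‖P y‖ + -1| * (‖P y‖ + 1) := fun y => by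
    rw [← abs_of_nonneg (by linarith [hP0 y] : (0 : ℝ) ≤ ‖P y‖ + 1), ← abs_mul]
    ring_nf
  have hQD : IntegrableOn (fun y => Q y * |‖P y‖ ^ 2 - 1|) F μ := by
    have habs : (fun y => Q y * |‖P y‖ ^ 2 - 1|) = fun y => |Q y * ‖P y‖ ^ 2 - Q y| :=
      funext fun y => by rw [← mul_sub_one, abs_mul, abs_of_nonneg (hQnonneg y)]
    rw [habs]
    exact (hQP2int.sub hQint).abs
  have hminus := integral_mul_add_const_sq hQint hQP hQP2int (-1)
  have hplus := integral_mul_add_const_sq hQint hQP hQP2int 1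
  have hCS := sq_integral_weighted_mul_le hQnonneg
    (f := fun y => |‖P y‖ + -1|) (g := fun y => ‖P y‖ + 1)
    (by simpa only [sq_abs] using
      integrable_mul_add_const_sq hQint hQP hQP2int (-1))
    (by simp only [← hfactor]; exact hQD)
    (integrable_mul_add_const_sq hQint hQP hQP2int 1)
  simp only [← hfactor, sq_abs, hminus, hplus] at hCS
  have hE : 0 ≤ C - 2 * B + A := by
    have : 0 ≤ ∫ y in F, Q y * (‖P y‖ + -1) ^ 2 ∂μ :=
      integral_nonneg fun y => mul_nonneg (hQnonneg y) (sq_nonneg _)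
    linarith
  have hG : C + 2 * B + A ≤ 4 := by linarith
  nlinarith [mul_le_mul_of_nonneg_left hG hE]

/-- **Bourgain's basic inequality** (Lemma 3.4).
Let `(Y, μ)` be a measure space, `F ⊆ Y` measurable, `Q : Y → [0,∞)` measurable and
`P : Y → ℂ` measurable.  Assume `∫_F Q dμ ≤ 1` and `∫_F Q |P|² dμ ≤ 1`.  Then
`∫_F Q |P| dμ ≤ (1/2) (∫_F Q dμ + ∫_F Q |P|² dμ) − (1/8) (∫_F Q ||P|² − 1| dμ)²`. -/
theorem stmt0 {Y : Type*} [MeasurableSpace Y] (μ : Measure Y) (F : Set Y)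
    (hF : MeasurableSet F) (Q : Y → ℝ) (P : Y → ℂ)
    (hQmeas : Measurable Q) (hQnonneg : ∀ y, 0 ≤ Q y) (hPmeas : Measurable P)
    (hQint : IntegrableOn Q F μ)
    (hQP2int : IntegrableOn (fun y => Q y * ‖P y‖ ^ 2) F μ)
    (hQ1 : ∫ y in F, Q y ∂μ ≤ 1)
    (hQP2 : ∫ y in F, Q y * ‖P y‖ ^ 2 ∂μ ≤ 1) :
    ∫ y in F, Q y * ‖P y‖ ∂μ ≤
      (1 / 2) * ((∫ y in F, Q y ∂μ) + ∫ y in F, Q y * ‖P y‖ ^ 2 ∂μ)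
        - (1 / 8) * (∫ y in F, Q y * |‖P y‖ ^ 2 - 1| ∂μ) ^ 2 :=
  stmt0_general μ F Q P hQnonneg hQint hQP2int hQ1 hQP2
end

section
/- Let 𝕋 be the unit circle with normalized Haar measure λ, F ⊆ 𝕋 closed, Q : 𝕋 → [0,∞) continuous, and (P_m) a sequence of continuous functions on 𝕋 such that the measures |P_m|²·λ converge weakly to λ, ∫_F Q dλ ≤ 1, and ∫_F Q|P_m|² dλ ≤ 1 for all m. Then liminf_{m→∞} ∫_F Q|P_m| dλ ≤ ∫_F Q dλ − (1/8)(limsup_{m→∞} ∫_F Q·||P_m|²−1| dλ)². -/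
/-!
Write `s = |P_m|`. Since `|s² - 1| = |s - 1| (s + 1)`, the Cauchy–Schwarz inequality for the
weight `Q` on `F` bounds `(∫_F Q |s² - 1|)²` by `(∫_F Q (s - 1)²) (∫_F Q (s + 1)²)`. The
normalisations `∫_F Q ≤ 1`, `∫_F Q s² ≤ 1` make the second factor at most `4`, and expanding the
first one gives Bourgain's inequality
`∫_F Q s ≤ (∫_F Q + ∫_F Q s²) / 2 - (1/8) (∫_F Q |s² - 1|)²`.
Approximating the indicator of the closed set `F` from above by continuous functions, the weak
convergence `|P_m|² λ → λ` yields `limsup_m ∫_F Q |P_m|² ≤ ∫_F Q`, and the theorem follows by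
taking the liminf in Bourgain's inequality.
-/

open MeasureTheory Filter

noncomputable section

instance : MeasurableSpace Circle := borel Circle
instance : BorelSpace Circle := ⟨rfl⟩

/-- The normalized Haar (Lebesgue) measure on the unit circle. -/
def haarCircle : Measure Circle := Measure.haarMeasure ⊤

open Topology

section

variable {α : Type*} [MeasurableSpace α] {μ : Measure α}

theorem sq_integral_mul_le_integral_mul_sq {w f g : α → ℝ} (hw : ∀ x, 0 ≤ w x)
    (hf : Integrable (fun x => w x * f x ^ 2) μ) (hg : Integrable (fun x => w x * g x ^ 2) μ)
    (hfg : Integrable (fun x => w x * (f x * g x)) μ) :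
    (∫ x, w x * (f x * g x) ∂μ) ^ 2 ≤ (∫ x, w x * f x ^ 2 ∂μ) * ∫ x, w x * g x ^ 2 ∂μ := by
  -- `t ↦ ∫ w (t f - g)²` is a nonnegative quadratic, so its discriminant is nonpositive.
  have hquad : ∀ t : ℝ, 0 ≤ (∫ x, w x * f x ^ 2 ∂μ) * (t * t) +
      (-2 * ∫ x, w x * (f x * g x) ∂μ) * t + ∫ x, w x * g x ^ 2 ∂μ := by
    intro t
    have hexpand : (fun x => w x * (t * f x - g x) ^ 2) = fun x =>
        t * t * (w x * f x ^ 2) + -2 * t * (w x * (f x * g x)) + w x * g x ^ 2 := by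
      funext x; ring
    have hnonneg : 0 ≤ ∫ x, w x * (t * f x - g x) ^ 2 ∂μ :=
      integral_nonneg fun x => mul_nonneg (hw x) (sq_nonneg _)
    have hfirst :
        Integrable (fun x => t * t * (w x * f x ^ 2) + -2 * t * (w x * (f x * g x))) μ :=
      (hf.const_mul _).add (hfg.const_mul _)
    rw [hexpand, integral_add hfirst hg,
      integral_add (hf.const_mul _) (hfg.const_mul _), integral_const_mul,
      integral_const_mul] at hnonneg
    linarith
  have := discrim_le_zero hquad
  rw [discrim] at this
  linarith

theorem bourgain_integral_mul_le {w s : α → ℝ} (hw : ∀ x, 0 ≤ w x) (hs : ∀ x, 0 ≤ s x)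
    (hw_int : Integrable w μ) (hws_int : Integrable (fun x => w x * s x) μ)
    (hws2_int : Integrable (fun x => w x * s x ^ 2) μ)
    (hw_le : ∫ x, w x ∂μ ≤ 1) (hws2_le : ∫ x, w x * s x ^ 2 ∂μ ≤ 1) :
    ∫ x, w x * s x ∂μ ≤ ((∫ x, w x ∂μ) + ∫ x, w x * s x ^ 2 ∂μ) / 2 -
      1 / 8 * (∫ x, w x * |s x ^ 2 - 1| ∂μ) ^ 2 := by
  have hs1 : ∀ x, 0 ≤ s x + 1 := fun x => by linarith [hs x]
  have hminus : (fun x => w x * |s x - 1| ^ 2) =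
      fun x => w x * s x ^ 2 - 2 * (w x * s x) + w x := by
    funext x; rw [sq_abs]; ring
  have hplus : (fun x => w x * (s x + 1) ^ 2) =
      fun x => w x * s x ^ 2 + 2 * (w x * s x) + w x := by
    funext x; ring
  have hprod : (fun x => w x * (|s x - 1| * (s x + 1))) = fun x => w x * |s x ^ 2 - 1| := by
    funext x
    rw [← abs_of_nonneg (hs1 x), ← abs_mul]
    ring_nf
  have hminus_int : Integrable (fun x => w x * s x ^ 2 - 2 * (w x * s x)) μ :=
    hws2_int.sub (hws_int.const_mul 2)
  have hplus_int : Integrable (fun x => w x * s x ^ 2 + 2 * (w x * s x)) μ :=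
    hws2_int.add (hws_int.const_mul 2)
  have hprod_int : Integrable (fun x => w x * |s x ^ 2 - 1|) μ :=
    (hws2_int.sub hw_int).abs.congr (.of_forall fun x => by
      simp only [Pi.sub_apply, ← mul_sub_one, abs_mul, abs_of_nonneg (hw x)])
  have hD : ∫ x, w x * |s x - 1| ^ 2 ∂μ =
      (∫ x, w x * s x ^ 2 ∂μ) - 2 * (∫ x, w x * s x ∂μ) + ∫ x, w x ∂μ := by
    rw [hminus, integral_add hminus_int hw_int, integral_sub hws2_int (hws_int.const_mul 2),
      integral_const_mul]
  have hE : ∫ x, w x * (s x + 1) ^ 2 ∂μ =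
      (∫ x, w x * s x ^ 2 ∂μ) + 2 * (∫ x, w x * s x ∂μ) + ∫ x, w x ∂μ := by
    rw [hplus, integral_add hplus_int hw_int, integral_add hws2_int (hws_int.const_mul 2),
      integral_const_mul]
  have hCS := sq_integral_mul_le_integral_mul_sq hw (hminus ▸ hminus_int.add hw_int)
    (hplus ▸ hplus_int.add hw_int) (hprod ▸ hprod_int)
  rw [hprod, hD, hE] at hCS
  have hD_nonneg : 0 ≤ ∫ x, w x * |s x - 1| ^ 2 ∂μ :=
    integral_nonneg fun x => mul_nonneg (hw x) (sq_nonneg _)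
  rw [hD] at hD_nonneg
  have hE_le : (∫ x, w x * s x ^ 2 ∂μ) + 2 * (∫ x, w x * s x ∂μ) + ∫ x, w x ∂μ ≤ 4 := by
    linarith
  linarith [hCS.trans (mul_le_mul_of_nonneg_left hE_le hD_nonneg)]

end

theorem limsup_setIntegral_mul_le_setIntegral {X : Type*} [TopologicalSpace X]
    [HasOuterApproxClosed X] [MeasurableSpace X] [OpensMeasurableSpace X]
    {μ : Measure X} [IsFiniteMeasure μ] {ρ : ℕ → X → ℝ} (hρ_nonneg : ∀ m x, 0 ≤ ρ m x)
    (hρ_int : ∀ m, Integrable (ρ m) μ)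
    (hρ : ∀ f : BoundedContinuousFunction X ℝ,
      Tendsto (fun m => ∫ x, f x * ρ m x ∂μ) atTop (𝓝 (∫ x, f x ∂μ)))
    {F : Set X} (hF : IsClosed F) (Q : BoundedContinuousFunction X ℝ) (hQ : ∀ x, 0 ≤ Q x) :
    limsup (fun m => ∫ x in F, Q x * ρ m x ∂μ) atTop ≤ ∫ x in F, Q x ∂μ := by
  let g : ℕ → BoundedContinuousFunction X ℝ := fun n =>
    Q * (hF.apprSeq n).comp _ NNReal.isometry_coe.lipschitz
  have hg_apply : ∀ n x, g n x = Q x * hF.apprSeq n x := fun _ _ => rfl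
  have hle_g : ∀ n m, ∫ x in F, Q x * ρ m x ∂μ ≤ ∫ x, g n x * ρ m x ∂μ := by
    intro n m
    have hg_int : Integrable (fun x => g n x * ρ m x) μ :=
      (hρ_int m).bdd_mul (g n).continuous.aestronglyMeasurable
        (.of_forall fun x => (g n).norm_coe_le_norm x)
    calc ∫ x in F, Q x * ρ m x ∂μ = ∫ x in F, g n x * ρ m x ∂μ :=
          setIntegral_congr_fun hF.measurableSet fun x hx => by
            rw [hg_apply, HasOuterApproxClosed.apprSeq_apply_eq_one hF n hx, NNReal.coe_one,
              mul_one]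
      _ ≤ ∫ x, g n x * ρ m x ∂μ :=
          setIntegral_le_integral hg_int (.of_forall fun x =>
            mul_nonneg (mul_nonneg (hQ x) (NNReal.coe_nonneg _)) (hρ_nonneg m x))
  have hlimsup_le : ∀ n, limsup (fun m => ∫ x in F, Q x * ρ m x ∂μ) atTop ≤ ∫ x, g n x ∂μ :=
    fun n => (hρ (g n)).limsup_eq ▸ limsup_le_limsup (.of_forall (hle_g n))
      (isBoundedUnder_of ⟨0, fun m => setIntegral_nonneg hF.measurableSet fun x _ =>
        mul_nonneg (hQ x) (hρ_nonneg m x)⟩).isCoboundedUnder_le (hρ (g n)).isBoundedUnder_le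
  have hg_tendsto : Tendsto (fun n => ∫ x, g n x ∂μ) atTop (𝓝 (∫ x in F, Q x ∂μ)) := by
    rw [← integral_indicator hF.measurableSet]
    refine tendsto_integral_of_dominated_convergence Q
      (fun n => (g n).continuous.aestronglyMeasurable) (Q.integrable μ) (fun n => ?_) ?_
    · refine .of_forall fun x => ?_
      rw [hg_apply, norm_mul, Real.norm_of_nonneg (hQ x), NNReal.norm_eq]
      exact mul_le_of_le_one_right (hQ x) (HasOuterApproxClosed.apprSeq_apply_le_one hF n x)
    · refine .of_forall fun x => ?_
      have := ((NNReal.continuous_coe.tendsto _).comp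
        (tendsto_pi_nhds.1 (HasOuterApproxClosed.tendsto_apprSeq hF) x)).const_mul (Q x)
      by_cases hx : x ∈ F <;> simpa [hg_apply, hx] using this
  exact ge_of_tendsto' hg_tendsto hlimsup_le

theorem liminf_le_sub_sq_limsup_of_le {a b c : ℕ → ℝ} {I a₀ b₀ : ℝ} (ha : ∀ m, a₀ ≤ a m)
    (hb : ∀ m, b m ≤ b₀) (hc : ∀ m, 0 ≤ c m) (hb_limsup : limsup b atTop ≤ I)
    (habc : ∀ m, a m ≤ (I + b m) / 2 - 1 / 8 * c m ^ 2) :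
    liminf a atTop ≤ I - 1 / 8 * (limsup c atTop) ^ 2 := by
  have hb_ge : ∀ m, 2 * a₀ - I ≤ b m := fun m => by nlinarith [habc m, ha m, sq_nonneg (c m)]
  have hc_le : ∀ m, c m ≤ 1 + 4 * (I + b₀) - 8 * a₀ := fun m => by
    nlinarith [habc m, ha m, hb m, sq_nonneg (c m - 1)]
  let u : ℕ → ℝ := fun m => (I + b m) / 2
  let v : ℕ → ℝ := fun m => -(1 / 8 * c m ^ 2)
  have hb_bdd : IsBoundedUnder (· ≤ ·) atTop b := isBoundedUnder_of ⟨b₀, hb⟩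
  have hb_cobdd : IsCoboundedUnder (· ≤ ·) atTop b :=
    (isBoundedUnder_of ⟨_, hb_ge⟩).isCoboundedUnder_le
  have hc_bdd : IsBoundedUnder (· ≤ ·) atTop c := isBoundedUnder_of ⟨_, hc_le⟩
  have hlimsup_u : limsup u atTop = (I + limsup b atTop) / 2 :=
    (Monotone.map_limsup_of_continuousAt (f := fun y => (I + y) / 2)
      (fun y z h => by linarith) b (by fun_prop) hb_bdd hb_cobdd).symm
  have hliminf_v : liminf v atTop = -(1 / 8 * limsup c atTop ^ 2) := by
    -- the cut-off `max y 0` makes `φ` antitone on all of `ℝ` and agrees with `y ↦ -y²/8` on `c`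
    let φ : ℝ → ℝ := fun y => -(1 / 8 * max y 0 ^ 2)
    have hφ_anti : Antitone φ := fun y z h => by simp only [φ, neg_le_neg_iff]; gcongr
    have hφc : φ ∘ c = v := by
      funext m; simp only [Function.comp_apply, φ, v, max_eq_left (hc m)]
    have hlimsup_c : 0 ≤ limsup c atTop := le_limsup_of_frequently_le (.of_forall hc) hc_bdd
    rw [← hφc, ← hφ_anti.map_limsup_of_continuousAt c (by fun_prop) hc_bdd
      (isBoundedUnder_of ⟨0, hc⟩).isCoboundedUnder_le]
    simp only [φ, max_eq_left hlimsup_c]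
  calc liminf a atTop ≤ liminf (u + v) atTop := by
        refine liminf_le_liminf (.of_forall fun m => ?_) (isBoundedUnder_of ⟨a₀, ha⟩)
          (isBoundedUnder_of ⟨(I + b₀) / 2, fun m => ?_⟩).isCoboundedUnder_ge
        · simpa only [Pi.add_apply, u, v, sub_eq_add_neg] using habc m
        · simp only [Pi.add_apply, u, v]
          nlinarith [hb m, sq_nonneg (c m)]
    _ ≤ limsup u atTop + liminf v atTop := by
        refine liminf_add_le (isBoundedUnder_of ⟨(I + (2 * a₀ - I)) / 2, fun m => ?_⟩)
          (isBoundedUnder_of ⟨(I + b₀) / 2, fun m => ?_⟩)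
          (isBoundedUnder_of ⟨-(1 / 8 * (1 + 4 * (I + b₀) - 8 * a₀) ^ 2), fun m => ?_⟩)
          (isBoundedUnder_of ⟨0, fun m => ?_⟩).isCoboundedUnder_ge
        all_goals simp only [u, v]
        · linarith [hb_ge m]
        · linarith [hb m]
        · nlinarith [hc m, hc_le m]
        · nlinarith [sq_nonneg (c m)]
    _ ≤ I - 1 / 8 * limsup c atTop ^ 2 := by
        rw [hlimsup_u, hliminf_v]
        linarith

instance : IsFiniteMeasure haarCircle := by
  unfold haarCircle; infer_instance

/-- **Lemma 3.6.**
Let `𝕋` be the unit circle with normalized Haar measure `λ`, `F ⊆ 𝕋` closed,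
`Q : 𝕋 → [0,∞)` continuous, and `(P_m)` a sequence of continuous functions on `𝕋` such that
the measures `|P_m|² λ` converge weakly to `λ`, `∫_F Q dλ ≤ 1` and `∫_F Q |P_m|² dλ ≤ 1`
for all `m`.  Then
`liminf_m ∫_F Q |P_m| dλ ≤ ∫_F Q dλ − (1/8) (limsup_m ∫_F Q ||P_m|² − 1| dλ)²`. -/
theorem stmt2 (F : Set Circle) (hF : IsClosed F)
    (Q : Circle → ℝ) (hQcont : Continuous Q) (hQnonneg : ∀ z, 0 ≤ Q z)
    (P : ℕ → Circle → ℂ) (hPcont : ∀ m, Continuous (P m))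
    (hweak : ∀ f : BoundedContinuousFunction Circle ℝ,
      Tendsto (fun m => ∫ z, f z * ‖P m z‖ ^ 2 ∂haarCircle) atTop
        (nhds (∫ z, f z ∂haarCircle)))
    (hQ1 : ∫ z in F, Q z ∂haarCircle ≤ 1)
    (hQP2 : ∀ m, ∫ z in F, Q z * ‖P m z‖ ^ 2 ∂haarCircle ≤ 1) :
    liminf (fun m => ∫ z in F, Q z * ‖P m z‖ ∂haarCircle) atTop ≤
      (∫ z in F, Q z ∂haarCircle) -
        (1 / 8) * (limsup (fun m => ∫ z in F, Q z * |‖P m z‖ ^ 2 - 1| ∂haarCircle) atTop) ^ 2 := by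
  have hint : ∀ {μ : Measure Circle} [IsFiniteMeasure μ] {g : Circle → ℝ}, Continuous g →
      Integrable g μ := fun hg => hg.integrable_of_hasCompactSupport (.of_compactSpace _)
  have hnorm : ∀ m, Continuous fun z => ‖P m z‖ := fun m => (hPcont m).norm
  have hlimsup := limsup_setIntegral_mul_le_setIntegral (fun m z => sq_nonneg ‖P m z‖)
    (fun m => hint ((hnorm m).pow 2)) hweak hF (.mkOfCompact ⟨Q, hQcont⟩) hQnonneg
  refine liminf_le_sub_sq_limsup_of_le (a₀ := 0) (b₀ := 1)
    (fun m => setIntegral_nonneg hF.measurableSet fun z _ =>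
      mul_nonneg (hQnonneg z) (norm_nonneg _))
    hQP2
    (fun m => setIntegral_nonneg hF.measurableSet fun z _ =>
      mul_nonneg (hQnonneg z) (abs_nonneg _))
    hlimsup fun m => ?_
  exact bourgain_integral_mul_le hQnonneg (fun z => norm_nonneg _) (hint hQcont)
    (hint (hQcont.mul (hnorm m))) (hint (hQcont.mul ((hnorm m).pow 2))) hQ1 (hQP2 m)
end
end

section
/- There exists an absolute constant K > 0 such that for every n ≥ 1 and all complex numbers c, (b_p)_{1≤p≤n}, (a_{pq})_{1≤p<q≤n}, if ε = (ε_1,…,ε_n) is uniformly distributed on {−1,1}^n and f(ε) = c + Σ_p b_p ε_p + Σ_{p<q} a_{pq} ε_p ε_q, then (E|f(ε)|²)^{1/2} ≤ K · E|f(ε)|. -/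
/-
Split a function on `{±1}ⁿ⁺¹` along the first coordinate as `F(ε) = G(ε') + ε₀ H(ε')`; for a
chaos of degree `≤ d`, `G` has degree `≤ d` and `H` degree `≤ d - 1`. Averaging the pointwise
inequality `‖a + b‖⁴ + ‖a - b‖⁴ ≤ 2 (‖a‖⁴ + 6 ‖a‖²‖b‖² + ‖b‖⁴)` over `ε'`, bounding the cross term
by Cauchy–Schwarz and inducting on `n` gives Bonami's bound `E‖F‖⁴ ≤ 9ᵈ (E‖F‖²)²`. Hölder's
inequality `(E u²)³ ≤ (E u)² E u⁴` turns this into `E‖F‖² ≤ 9ᵈ (E‖F‖)²`, so `K = 9` for `d = 2`.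
-/

open Finset

variable {E : Type*}

theorem Fintype.sum_fin_succ_pi_bool {M : Type*} [AddCommMonoid M] {n : ℕ}
    (φ : (Fin (n + 1) → Bool) → M) :
    ∑ y, φ y = ∑ x, (φ (Fin.cons true x) + φ (Fin.cons false x)) := by
  rw [← (Fin.consEquiv fun _ => Bool).sum_comp, Fintype.sum_prod_type, Fintype.sum_bool,
    ← sum_add_distrib]
  rfl

theorem norm_add_pow_four_add_norm_sub_pow_four_le [NormedAddCommGroup E] [InnerProductSpace ℝ E]
    (a b : E) :
    ‖a + b‖ ^ 4 + ‖a - b‖ ^ 4 ≤ 2 * (‖a‖ ^ 4 + 6 * (‖a‖ ^ 2 * ‖b‖ ^ 2) + ‖b‖ ^ 4) := by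
  have hinner : inner ℝ a b ^ 2 ≤ (‖a‖ * ‖b‖) ^ 2 := by
    rw [← sq_abs]
    exact pow_le_pow_left₀ (abs_nonneg _) (abs_real_inner_le_norm a b) 2
  calc ‖a + b‖ ^ 4 + ‖a - b‖ ^ 4 = (‖a + b‖ ^ 2) ^ 2 + (‖a - b‖ ^ 2) ^ 2 := by ring
    _ = 2 * (‖a‖ ^ 2 + ‖b‖ ^ 2) ^ 2 + 8 * inner ℝ a b ^ 2 := by
      rw [norm_add_sq_real, norm_sub_sq_real]; ring
    _ ≤ _ := by nlinarith

theorem sum_sq_pow_three_le_sq_sum_mul_sum_pow_four {ι : Type*} (s : Finset ι) {u : ι → ℝ}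
    (hu : ∀ i ∈ s, 0 ≤ u i) :
    (∑ i ∈ s, u i ^ 2) ^ 3 ≤ (∑ i ∈ s, u i) ^ 2 * ∑ i ∈ s, u i ^ 4 := by
  set S₁ := ∑ i ∈ s, u i
  set S₂ := ∑ i ∈ s, u i ^ 2
  set S₃ := ∑ i ∈ s, u i ^ 3
  set S₄ := ∑ i ∈ s, u i ^ 4
  have h₁₃ : S₂ ^ 2 ≤ S₁ * S₃ := sum_sq_le_sum_mul_sum_of_sq_le_mul s hu
    (fun i hi => pow_nonneg (hu i hi) 3) (fun i _ => by ring_nf; rfl)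
  have h₂₄ : S₃ ^ 2 ≤ S₂ * S₄ := sum_sq_le_sum_mul_sum_of_sq_le_mul s
    (fun i _ => sq_nonneg _) (fun i hi => pow_nonneg (hu i hi) 4) (fun i _ => by ring_nf; rfl)
  have hS₂ : 0 ≤ S₂ := sum_nonneg fun i _ => sq_nonneg _
  rcases hS₂.eq_or_lt with hzero | hpos
  · rw [← hzero, zero_pow three_ne_zero]
    exact mul_nonneg (sq_nonneg _) (sum_nonneg fun i hi => pow_nonneg (hu i hi) 4)
  refine le_of_mul_le_mul_right ?_ hpos
  calc S₂ ^ 3 * S₂ = (S₂ ^ 2) ^ 2 := by ring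
    _ ≤ (S₁ * S₃) ^ 2 := pow_le_pow_left₀ (sq_nonneg _) h₁₃ 2
    _ = S₁ ^ 2 * S₃ ^ 2 := by ring
    _ ≤ S₁ ^ 2 * (S₂ * S₄) := by gcongr
    _ = S₁ ^ 2 * S₄ * S₂ := by ring

theorem bonami_induction_step {N K A B M P Q : ℝ} (hN : 0 ≤ N) (hK : 0 ≤ K) (hB : 0 ≤ B)
    (hP : 0 ≤ P) (hQ : 0 ≤ Q) (hAP : N * A ≤ 9 * K * P ^ 2) (hBQ : N * B ≤ K * Q ^ 2)
    (hMAB : M ^ 2 ≤ A * B) : N * (A + 6 * M + B) ≤ 9 * K * (P + Q) ^ 2 := by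
  have hcross : N * M ≤ 3 * K * (P * Q) := by
    refine le_of_pow_le_pow_left₀ two_ne_zero (by positivity) ?_
    calc (N * M) ^ 2 = N ^ 2 * M ^ 2 := by ring
      _ ≤ N ^ 2 * (A * B) := by gcongr
      _ = (N * A) * (N * B) := by ring
      _ ≤ (9 * K * P ^ 2) * (K * Q ^ 2) := mul_le_mul hAP hBQ (by positivity) (by positivity)
      _ = (3 * K * (P * Q)) ^ 2 := by ring
  nlinarith [mul_nonneg hK (sq_nonneg Q)]

def boolSign (b : Bool) : ℝ := if b then 1 else -1

theorem boolSign_mul_self (b : Bool) : boolSign b * boolSign b = 1 := by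
  cases b <;> norm_num [boolSign]

-- Rademacher chaos of degree `≤ d`; the `True` case holds since functions of no variable are
-- constant.
def IsChaos [AddCommGroup E] [Module ℝ E] : ℕ → (n : ℕ) → ((Fin n → Bool) → E) → Prop
  | 0, _, F => ∃ c, ∀ y, F y = c
  | _ + 1, 0, _ => True
  | d + 1, n + 1, F => ∃ G H, IsChaos (d + 1) n G ∧ IsChaos d n H ∧
      ∀ y, F y = G (Fin.tail y) + boolSign (y 0) • H (Fin.tail y)

namespace IsChaos

section Module

variable [AddCommGroup E] [Module ℝ E]

theorem const (d n : ℕ) (c : E) : IsChaos d n (fun _ => c) := by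
  induction n generalizing d c with
  | zero => cases d <;> first | exact ⟨c, fun _ => rfl⟩ | trivial
  | succ n ih =>
    cases d with
    | zero => exact ⟨c, fun _ => rfl⟩
    | succ d => exact ⟨_, _, ih (d + 1) c, ih d 0, fun _ => by simp⟩

theorem add {d n : ℕ} {F F' : (Fin n → Bool) → E} (hF : IsChaos d n F) (hF' : IsChaos d n F') :
    IsChaos d n (F + F') := by
  induction n generalizing d with
  | zero =>
    cases d with
    | zero =>
      obtain ⟨c, hc⟩ := hF
      obtain ⟨c', hc'⟩ := hF'
      exact ⟨c + c', fun y => by simp [hc, hc']⟩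
    | succ d => trivial
  | succ n ih =>
    cases d with
    | zero =>
      obtain ⟨c, hc⟩ := hF
      obtain ⟨c', hc'⟩ := hF'
      exact ⟨c + c', fun y => by simp [hc, hc']⟩
    | succ d =>
      obtain ⟨G, H, hG, hH, hFGH⟩ := hF
      obtain ⟨G', H', hG', hH', hFGH'⟩ := hF'
      refine ⟨G + G', H + H', ih hG hG', ih hH hH', fun y => ?_⟩
      simp only [Pi.add_apply, hFGH, hFGH', smul_add]
      abel

theorem succ {d n : ℕ} {F : (Fin n → Bool) → E} (hF : IsChaos d n F) : IsChaos (d + 1) n F := by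
  induction n generalizing d with
  | zero => trivial
  | succ n ih =>
    cases d with
    | zero =>
      obtain ⟨c, hc⟩ := hF
      exact ⟨_, _, const 1 n c, const 0 n 0, fun y => by simp [hc]⟩
    | succ d =>
      obtain ⟨G, H, hG, hH, hFGH⟩ := hF
      exact ⟨G, H, ih hG, ih hH, hFGH⟩

theorem sum {ι : Type*} {d n : ℕ} (s : Finset ι) {F : ι → (Fin n → Bool) → E}
    (hF : ∀ i ∈ s, IsChaos d n (F i)) : IsChaos d n (fun y => ∑ i ∈ s, F i y) := by
  induction s using Finset.cons_induction with
  | empty => simpa using const d n (0 : E)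
  | cons j s hj ih =>
    simp only [sum_cons]
    exact (hF j (mem_cons_self j s)).add (ih fun i hi => hF i (mem_cons_of_mem hi))

theorem boolSign_smul {d n : ℕ} {F : (Fin n → Bool) → E} (hF : IsChaos d n F) (p : Fin n) :
    IsChaos (d + 1) n (fun y => boolSign (y p) • F y) := by
  induction n generalizing d with
  | zero => exact p.elim0
  | succ n ih =>
    cases d with
    | zero =>
      obtain ⟨c, hc⟩ := hF
      cases p using Fin.cases with
      | zero => exact ⟨0, _, const 1 n 0, const 0 n c, fun y => by simp [hc]⟩
      | succ i => exact ⟨_, 0, ih (const 0 n c) i, const 0 n 0, fun y => by simp [hc, Fin.tail]⟩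
    | succ d =>
      obtain ⟨G, H, hG, hH, hFGH⟩ := hF
      cases p using Fin.cases with
      | zero =>
        refine ⟨H, G, hH.succ.succ, hG, fun y => ?_⟩
        simp only [hFGH, smul_add, smul_smul, boolSign_mul_self, one_smul, add_comm]
      | succ i =>
        refine ⟨_, _, ih hG i, ih hH i, fun y => ?_⟩
        simp only [hFGH, smul_add, smul_smul, Fin.tail, mul_comm]

theorem quadratic {n : ℕ} (c : E) (b : Fin n → E) (a : Fin n × Fin n → E)
    (s : Finset (Fin n × Fin n)) :
    IsChaos 2 n fun y => c + ∑ p, boolSign (y p) • b p +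
      ∑ pq ∈ s, boolSign (y pq.1) • boolSign (y pq.2) • a pq :=
  ((const 2 n c).add (sum univ fun p _ => ((const 0 n (b p)).boolSign_smul p).succ)).add
    (sum s fun pq _ => ((const 0 n (a pq)).boolSign_smul pq.2).boolSign_smul pq.1)

end Module

section InnerProductSpace

variable [NormedAddCommGroup E] [InnerProductSpace ℝ E]

theorem two_pow_mul_sum_norm_pow_four_le {d n : ℕ} {F : (Fin n → Bool) → E}
    (hF : IsChaos d n F) : 2 ^ n * ∑ y, ‖F y‖ ^ 4 ≤ 9 ^ d * (∑ y, ‖F y‖ ^ 2) ^ 2 := by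
  induction n generalizing d with
  | zero =>
    simp only [Fintype.sum_unique, pow_zero, one_mul, ← pow_mul]
    exact le_mul_of_one_le_left (by positivity) (one_le_pow₀ (by norm_num))
  | succ n ih =>
    cases d with
    | zero =>
      obtain ⟨c, hc⟩ := hF
      simp only [hc, sum_const, card_univ, Fintype.card_fun, Fintype.card_bool, Fintype.card_fin,
        nsmul_eq_mul]
      push_cast
      exact le_of_eq (by ring)
    | succ d =>
      obtain ⟨G, H, hG, hH, hFGH⟩ := hF
      have hF_cons (b : Bool) (x : Fin n → Bool) : F (Fin.cons b x) = G x + boolSign b • H x := by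
        simp [hFGH]
      set A := ∑ x, ‖G x‖ ^ 4
      set B := ∑ x, ‖H x‖ ^ 4
      set M := ∑ x, ‖G x‖ ^ 2 * ‖H x‖ ^ 2
      set P := ∑ x, ‖G x‖ ^ 2
      set Q := ∑ x, ‖H x‖ ^ 2
      have h4 : ∑ y, ‖F y‖ ^ 4 ≤ 2 * (A + 6 * M + B) :=
        calc ∑ y, ‖F y‖ ^ 4 = ∑ x, (‖G x + H x‖ ^ 4 + ‖G x - H x‖ ^ 4) := by
              simp [Fintype.sum_fin_succ_pi_bool, hF_cons, boolSign, ← sub_eq_add_neg]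
          _ ≤ ∑ x, 2 * (‖G x‖ ^ 4 + 6 * (‖G x‖ ^ 2 * ‖H x‖ ^ 2) + ‖H x‖ ^ 4) :=
              sum_le_sum fun x _ => norm_add_pow_four_add_norm_sub_pow_four_le (G x) (H x)
          _ = 2 * (A + 6 * M + B) := by simp only [← mul_sum, sum_add_distrib, A, B, M]
      have h2 : ∑ y, ‖F y‖ ^ 2 = 2 * (P + Q) :=
        calc ∑ y, ‖F y‖ ^ 2 = ∑ x, (‖G x + H x‖ ^ 2 + ‖G x - H x‖ ^ 2) := by
              simp [Fintype.sum_fin_succ_pi_bool, hF_cons, boolSign, ← sub_eq_add_neg]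
          _ = ∑ x, 2 * (‖G x‖ ^ 2 + ‖H x‖ ^ 2) := sum_congr rfl fun x _ => by
              simpa only [sq] using parallelogram_law_with_norm ℝ (G x) (H x)
          _ = 2 * (P + Q) := by simp only [← mul_sum, sum_add_distrib, P, Q]
      have hCS : M ^ 2 ≤ A * B := sum_sq_le_sum_mul_sum_of_sq_le_mul univ
        (fun x _ => by positivity) (fun x _ => by positivity) (fun x _ => by ring_nf; rfl)
      have hstep : 2 ^ n * (A + 6 * M + B) ≤ 9 * 9 ^ d * (P + Q) ^ 2 :=
        bonami_induction_step (by positivity) (by positivity) (by positivity) (by positivity)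
          (by positivity) (by rw [← pow_succ']; exact ih hG) (ih hH) hCS
      calc 2 ^ (n + 1) * ∑ y, ‖F y‖ ^ 4 ≤ 2 ^ (n + 1) * (2 * (A + 6 * M + B)) := by gcongr
        _ = 4 * (2 ^ n * (A + 6 * M + B)) := by ring
        _ ≤ 4 * (9 * 9 ^ d * (P + Q) ^ 2) := by gcongr
        _ = 9 ^ (d + 1) * (∑ y, ‖F y‖ ^ 2) ^ 2 := by rw [h2]; ring

theorem two_pow_mul_sum_norm_sq_le {d n : ℕ} {F : (Fin n → Bool) → E}
    (hF : IsChaos d n F) : 2 ^ n * ∑ y, ‖F y‖ ^ 2 ≤ 9 ^ d * (∑ y, ‖F y‖) ^ 2 := by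
  set S₁ := ∑ y, ‖F y‖
  set S₂ := ∑ y, ‖F y‖ ^ 2
  have hHolder : S₂ ^ 3 ≤ S₁ ^ 2 * ∑ y, ‖F y‖ ^ 4 :=
    sum_sq_pow_three_le_sq_sum_mul_sum_pow_four univ fun y _ => norm_nonneg (F y)
  have hBonami := hF.two_pow_mul_sum_norm_pow_four_le
  have hS₂ : 0 ≤ S₂ := sum_nonneg fun y _ => sq_nonneg ‖F y‖
  rcases hS₂.eq_or_lt with hzero | hpos
  · rw [← hzero, mul_zero]; positivity
  refine le_of_mul_le_mul_right ?_ (pow_pos hpos 2)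
  calc 2 ^ n * S₂ * S₂ ^ 2 = 2 ^ n * S₂ ^ 3 := by ring
    _ ≤ 2 ^ n * (S₁ ^ 2 * ∑ y, ‖F y‖ ^ 4) := by gcongr
    _ = S₁ ^ 2 * (2 ^ n * ∑ y, ‖F y‖ ^ 4) := by ring
    _ ≤ S₁ ^ 2 * (9 ^ d * S₂ ^ 2) := by gcongr
    _ = 9 ^ d * S₁ ^ 2 * S₂ ^ 2 := by ring

end InnerProductSpace

end IsChaos

/-- **Khintchine–Bonami inequality** for Rademacher chaos of degree at most 2.
There exists an absolute constant `K > 0` such that for every `n ≥ 1` and all complex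
numbers `c`, `(b_p)`, `(a_{pq})_{p<q}`, if `ε` is uniformly distributed on `{−1,1}ⁿ` and
`f(ε) = c + Σ_p b_p ε_p + Σ_{p<q} a_{pq} ε_p ε_q`, then `(E |f(ε)|²)^{1/2} ≤ K • E |f(ε)|`.
Here the expectation is the average over all `2ⁿ` sign vectors. -/
theorem stmt3 :
    ∃ K : ℝ, 0 < K ∧
      ∀ (n : ℕ), 1 ≤ n → ∀ (c : ℂ) (b : Fin n → ℂ) (a : Fin n → Fin n → ℂ),
        ∀ f : (Fin n → ℝ) → ℂ,
          (∀ ε : Fin n → ℝ,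
            f ε = c + (∑ p : Fin n, b p * (ε p : ℂ)) +
              ∑ pq ∈ Finset.univ.filter (fun pq : Fin n × Fin n => pq.1 < pq.2),
                a pq.1 pq.2 * (ε pq.1 : ℂ) * (ε pq.2 : ℂ)) →
          Real.sqrt ((1 / 2 ^ n) *
              ∑ s : Fin n → Bool, ‖f (fun p => if s p then 1 else -1)‖ ^ 2) ≤
            K * ((1 / 2 ^ n) *
              ∑ s : Fin n → Bool, ‖f (fun p => if s p then 1 else -1)‖) := by
  refine ⟨9, by norm_num, fun n _ c b a f hf => ?_⟩
  set F : (Fin n → Bool) → ℂ := fun s => f (fun p => if s p then 1 else -1)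
  have hF : IsChaos 2 n F := by
    convert IsChaos.quadratic c b (fun pq => a pq.1 pq.2)
      (univ.filter fun pq : Fin n × Fin n => pq.1 < pq.2) using 2 with y
    simp only [F, hf, boolSign, Complex.real_smul]
    congr 1
    · exact congrArg (c + ·) (sum_congr rfl fun p _ => mul_comm _ _)
    · exact sum_congr rfl fun pq _ => by ring
  have hL2L1 := hF.two_pow_mul_sum_norm_sq_le
  rw [Real.sqrt_le_left (by positivity)]
  calc 1 / 2 ^ n * ∑ y, ‖F y‖ ^ 2 = (2 ^ n * ∑ y, ‖F y‖ ^ 2) / (2 ^ n) ^ 2 := by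
        field_simp
    _ ≤ (9 ^ 2 * (∑ y, ‖F y‖) ^ 2) / (2 ^ n) ^ 2 := by gcongr
    _ = (9 * (1 / 2 ^ n * ∑ y, ‖F y‖)) ^ 2 := by field_simp
end

section
/- Let c : ℤ → ℝ satisfy c_n ≥ 0 for all n and Σ_{n∈ℤ} c_n ≤ 1, and define the continuous function φ on the unit circle by φ(z) = Σ_{n∈ℤ} c_n z^n. Then the level set {z ∈ 𝕋 : φ(z) = 1} is either the whole circle 𝕋 or a finite set (contained in a finite subgroup of 𝕋). -/
/-!
Taking real parts, `φ z = 1` reads `Σ cₙ Re(zⁿ) = 1 ≥ Σ cₙ`, while `Re(zⁿ) ≤ 1` termwise; so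
`Re(zᵐ) = 1`, i.e. `zᵐ = 1`, for every `m` with `cₘ > 0`. If some `m ≠ 0` has `cₘ > 0`, the
level set therefore lies in the finite group of `|m|`-th roots of unity; otherwise `φ` is the
constant `c₀`.
-/

open Complex ComplexOrder

theorem Summable.eq_of_le_of_tsum_le {ι α : Type*} [AddCommGroup α] [PartialOrder α]
    [IsOrderedAddMonoid α] [TopologicalSpace α] [IsTopologicalAddGroup α] [OrderClosedTopology α]
    {f g : ι → α} (h : f ≤ g) (hf : Summable f) (hg : Summable g)
    (hsum : ∑' i, g i ≤ ∑' i, f i) (i : ι) : f i = g i :=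
  eq_of_le_of_not_lt (h i) fun hi ↦ (hf.tsum_lt_tsum h hi hg).not_ge hsum

namespace Circle

theorem re_coe_le_one (z : Circle) : (z : ℂ).re ≤ 1 :=
  (re_le_norm _).trans_eq z.norm_coe

theorem eq_one_of_re_coe_eq_one {z : Circle} (h : (z : ℂ).re = 1) : z = 1 := by
  have hnonneg : 0 ≤ (z : ℂ) := re_eq_norm.1 (by rw [h, z.norm_coe])
  ext
  rw [← re_add_im (z : ℂ), h, ((nonneg_iff.1 hnonneg).2).symm]
  simp

theorem finite_setOf_zpow_eq_one {n : ℤ} (hn : n ≠ 0) : {z : Circle | z ^ n = 1}.Finite := by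
  have hroots : {w : ℂ | w ^ n.natAbs = 1}.Finite :=
    (Polynomial.nthRootsFinset n.natAbs (1 : ℂ)).finite_toSet.subset fun w hw ↦
      (Polynomial.mem_nthRootsFinset (Int.natAbs_pos.2 hn) 1).2 hw
  refine (hroots.preimage coe_injective.injOn).subset fun (z : Circle) (hz : z ^ n = 1) ↦ ?_
  change (z : ℂ) ^ n.natAbs = 1
  rw [← coe_pow, pow_natAbs_eq_one.2 hz, coe_one]

end Circle

section NonnegCoefficients

variable {c : ℤ → ℝ}

theorem summable_coeff_mul_zpow (hc0 : ∀ n, 0 ≤ c n) (hc : Summable c) (z : Circle) :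
    Summable fun n ↦ (c n : ℂ) * (z : ℂ) ^ n :=
  hc.of_norm_bounded fun n ↦ by
    rw [norm_mul, norm_real, Real.norm_of_nonneg (hc0 n), ← Circle.coe_zpow, Circle.norm_coe,
      mul_one]

theorem Circle.zpow_eq_one_of_tsum_coeff_mul_zpow_eq_one (hc0 : ∀ n, 0 ≤ c n) (hc : Summable c)
    (hc1 : ∑' n, c n ≤ 1) {z : Circle} (hz : ∑' n, (c n : ℂ) * (z : ℂ) ^ n = 1) {m : ℤ}
    (hm : 0 < c m) : z ^ m = 1 := by
  have hre : HasSum (fun n ↦ c n * ((z ^ n : Circle) : ℂ).re) 1 := by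
    simpa [hz] using hasSum_re (summable_coeff_mul_zpow hc0 hc z).hasSum
  have hle : (fun n ↦ c n * ((z ^ n : Circle) : ℂ).re) ≤ c := fun n ↦
    mul_le_of_le_one_right (hc0 n) (z ^ n).re_coe_le_one
  have hcm := Summable.eq_of_le_of_tsum_le hle hre.summable hc (hre.tsum_eq ▸ hc1) m
  exact eq_one_of_re_coe_eq_one ((mul_eq_left₀ hm.ne').1 hcm)

theorem tsum_coeff_mul_zpow_eq_of_forall_ne_zero (hc : ∀ n, n ≠ 0 → c n = 0) (z : Circle) :
    ∑' n, (c n : ℂ) * (z : ℂ) ^ n = c 0 :=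
  (tsum_eq_single 0 fun n hn ↦ by simp [hc n hn]).trans (by simp)

end NonnegCoefficients

/-- **Structure of the level set `{φ = 1}`** (Section 4).
Let `c : ℤ → ℝ` satisfy `c_n ≥ 0` for all `n` and `Σ_{n∈ℤ} c_n ≤ 1`, and define the
continuous function `φ` on the unit circle by `φ(z) = Σ_{n∈ℤ} c_n z^n`.  Then the level set
`{z ∈ 𝕋 : φ(z) = 1}` is either the whole circle or a finite set. -/
theorem stmt7 (c : ℤ → ℝ) (hc0 : ∀ n, 0 ≤ c n) (hsummable : Summable c)
    (hc1 : ∑' n : ℤ, c n ≤ 1)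
    (φ : Circle → ℂ) (hφ : ∀ z : Circle, φ z = ∑' n : ℤ, (c n : ℂ) * (z : ℂ) ^ n) :
    (∀ z : Circle, φ z = 1) ∨ {z : Circle | φ z = 1}.Finite := by
  by_cases hc : ∃ m ≠ 0, c m ≠ 0
  · obtain ⟨m, hm0, hm⟩ := hc
    refine .inr <| (Circle.finite_setOf_zpow_eq_one hm0).subset fun z hz ↦ ?_
    exact Circle.zpow_eq_one_of_tsum_coeff_mul_zpow_eq_one hc0 hsummable hc1
      ((hφ z).symm.trans hz) ((hc0 m).lt_of_ne' hm)
  · push Not at hc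
    have hconst (z : Circle) : φ z = c 0 :=
      (hφ z).trans (tsum_coeff_mul_zpow_eq_of_forall_ne_zero hc z)
    by_cases h1 : (c 0 : ℂ) = 1
    · exact .inl fun z ↦ (hconst z).trans h1
    · exact .inr <| Set.finite_empty.subset fun z hz ↦ h1 ((hconst z).symm.trans hz)
end
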